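/- Let λ, λ̃ ∈ ℝ and let G, G̃ be probability measures on (0,∞). If the zero-location SNSM densities coincide, i.e., f_SNSM(z; 0, λ, G) = f_SNSM(z; 0, λ̃, G̃) for almost all z ∈ ℝ, then λ = λ̃ and G = G̃. -/

import Mathlib

open MeasureTheory

/-- Standard normal density. -/
noncomputable def stdPhi (z : ℝ) : ℝ := Real.exp (-(z ^ 2) / 2) / Real.sqrt (2 * Real.pi)

/-- Standard normal cumulative distribution function. -/
noncomputable def stdPhiCDF (z : ℝ) : ℝ := ∫ t in Set.Iic z, stdPhi t

/-- Skew-normal density with location `μ`, shape `lam`, scale `σ`. -/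
noncomputable def snPDF (μ lam σ z : ℝ) : ℝ :=
  (2 / σ) * stdPhi ((z - μ) / σ) * stdPhiCDF (lam * ((z - μ) / σ))

/-- Skew-normal scale mixture density with mixing distribution `G` on `(0, ∞)`. -/
noncomputable def snsmPDF (μ lam : ℝ) (G : Measure ℝ) (z : ℝ) : ℝ :=
  ∫ σ, snPDF μ lam σ z ∂G

/-!
Since `Φ(t) + Φ(-t) = 1`, adding the density at `z` and at `-z` removes the skewing factor: the
symmetrisation of `f_SNSM(·; 0, λ, G)` is the normal scale mixture `f_SNSM(·; 0, 0, G)`. Hence the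
normal scale mixtures of `G` and `G'` agree a.e., and by continuity everywhere on `(0, ∞)`.
As `φ(√(n+1)/σ) = φ(1/σ) · exp(-1/(2σ²))ⁿ`, the value of the normal scale mixture at `√(n+1)` is
the `n`-th moment of the push-forward of `σ⁻¹ φ(1/σ) dG(σ)` under `σ ↦ exp(-1/(2σ²)) ∈ [0, 1]`.
By the Weierstrass theorem a finite measure on `[0, 1]` is determined by its moments, and since
this map is injective and the weight positive on `(0, ∞)`, `G = G'`. Finally, for `z > 0` the
mixture density is strictly increasing in `λ` because `Φ` is, so `λ = λ'`.
-/

open Real Set ProbabilityTheory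
open scoped ENNReal

theorem MeasureTheory.Measure.ext_of_forall_integral_pow_eq {s : Set ℝ} [CompactSpace s]
    {ν ν' : Measure s} [IsFiniteMeasure ν] [IsFiniteMeasure ν']
    (h : ∀ n : ℕ, ∫ x, (x : ℝ) ^ n ∂ν = ∫ x, (x : ℝ) ^ n ∂ν') : ν = ν' := by
  have integral_continuous (μ : Measure s) [IsFiniteMeasure μ] :
      Continuous fun f : C(s, ℝ) => ∫ x, f x ∂μ :=
    (continuous_integral.comp (ContinuousMap.toLp (E := ℝ) 1 μ ℝ).continuous).congr
      fun f => integral_congr_ae (ContinuousMap.coeFn_toLp (p := 1) μ f)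
  have polynomial_eq : EqOn (fun f : C(s, ℝ) => ∫ x, f x ∂ν) (fun f => ∫ x, f x ∂ν')
      (polynomialFunctions s) := by
    rintro - ⟨p, -, rfl⟩
    have integrable (μ : Measure s) [IsFiniteMeasure μ] (i : ℕ) :
        Integrable (fun x : s => p.coeff i * (x : ℝ) ^ i) μ := by
      refine Continuous.integrable_of_hasCompactSupport ?_ (.of_compactSpace _)
      fun_prop
    simp only [AlgHom.coe_toRingHom, Polynomial.toContinuousMapOnAlgHom_apply,
      Polynomial.toContinuousMapOn_apply, Polynomial.toContinuousMap_apply,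
      Polynomial.eval_eq_sum_range]
    rw [integral_finsetSum _ fun i _ => integrable ν i,
      integral_finsetSum _ fun i _ => integrable ν' i]
    simp only [integral_const_mul, h]
  have integral_eq := (integral_continuous ν).ext_on ?_ (integral_continuous ν') polynomial_eq
  · exact ext_of_forall_integral_eq_of_IsFiniteMeasure fun f =>
      congrFun integral_eq f.toContinuousMap
  · rw [dense_iff_closure_eq, ← Subalgebra.topologicalClosure_coe,
      polynomialFunctions.topologicalClosure]
    rfl

theorem MeasureTheory.Measure.eq_of_map_eq_of_injOn {α β : Type*} [MeasurableSpace α]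
    [StandardBorelSpace α] [MeasurableSpace β] [MeasurableSpace.CountablySeparated β]
    {f : α → β} {s : Set α} {ν ν' : Measure α} (hf : Measurable f) (hs : MeasurableSet s)
    (hinj : InjOn f s) (hν : ∀ᵐ x ∂ν, x ∈ s) (hν' : ∀ᵐ x ∂ν', x ∈ s)
    (h : ν.map f = ν'.map f) : ν = ν' := by
  have measure_eq_map_image (μ : Measure α) (hμ : ∀ᵐ x ∂μ, x ∈ s) {t : Set α}
      (ht : MeasurableSet t) :
      μ t = μ.map f (f '' (t ∩ s)) := by
    rw [Measure.map_apply hf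
      ((ht.inter hs).image_of_measurable_injOn hf (hinj.mono inter_subset_right))]
    refine measure_congr ?_
    filter_upwards [hμ] with x hx
    change (x ∈ t) = (f x ∈ f '' (t ∩ s))
    rw [hinj.mem_image_iff inter_subset_right hx]
    simp [hx]
  ext t ht
  rw [measure_eq_map_image ν hν ht, measure_eq_map_image ν' hν' ht, h]

lemma stdPhi_eq_gaussianPDFReal : stdPhi = gaussianPDFReal 0 1 := by
  ext z
  simp [stdPhi, gaussianPDFReal, div_eq_inv_mul]

lemma stdPhi_pos (z : ℝ) : 0 < stdPhi z := by
  rw [stdPhi_eq_gaussianPDFReal]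
  exact gaussianPDFReal_pos _ _ _ one_ne_zero

lemma stdPhi_neg (z : ℝ) : stdPhi (-z) = stdPhi z := by
  simp [stdPhi]

@[fun_prop]
lemma continuous_stdPhi : Continuous stdPhi := by
  unfold stdPhi
  fun_prop

lemma integrable_stdPhi : Integrable stdPhi := by
  rw [stdPhi_eq_gaussianPDFReal]
  exact integrable_gaussianPDFReal 0 1

lemma integral_stdPhi : ∫ z, stdPhi z = 1 := by
  rw [stdPhi_eq_gaussianPDFReal]
  exact integral_gaussianPDFReal_eq_one 0 one_ne_zero

lemma abs_mul_stdPhi_le_one (t : ℝ) : |t| * stdPhi t ≤ 1 := by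
  have h_sqrt : 1 ≤ √(2 * π) := Real.one_le_sqrt.2 (by nlinarith [pi_gt_three])
  have h_exp : |t| * exp (-(t ^ 2) / 2) ≤ 1 := by
    have := add_one_le_exp (t ^ 2 / 2)
    rw [neg_div, exp_neg, ← div_eq_mul_inv, div_le_one (exp_pos _)]
    nlinarith [sq_abs t, sq_nonneg (|t| - 1)]
  rw [stdPhi, mul_div_assoc', div_le_one (by positivity)]
  linarith

lemma stdPhi_sqrt_mul (n : ℕ) (t : ℝ) :
    stdPhi (√(n + 1) * t) = stdPhi t * exp (-(t ^ 2) / 2) ^ n := by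
  rw [stdPhi, stdPhi, mul_pow, sq_sqrt (by positivity), ← exp_nat_mul, div_mul_eq_mul_div,
    ← exp_add]
  congr 2
  ring

lemma stdPhiCDF_nonneg (z : ℝ) : 0 ≤ stdPhiCDF z :=
  integral_nonneg fun t => (stdPhi_pos t).le

lemma stdPhiCDF_le_one (z : ℝ) : stdPhiCDF z ≤ 1 := by
  rw [stdPhiCDF, ← integral_stdPhi]
  exact setIntegral_le_integral integrable_stdPhi (.of_forall fun t => (stdPhi_pos t).le)

lemma stdPhiCDF_add_stdPhiCDF_neg (z : ℝ) : stdPhiCDF z + stdPhiCDF (-z) = 1 := by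
  have h_neg : stdPhiCDF (-z) = ∫ t in Ioi z, stdPhi t := by
    rw [stdPhiCDF, ← integral_comp_neg_Ioi]
    simp only [stdPhi_neg]
  rw [h_neg, stdPhiCDF, ← compl_Iic, integral_add_compl measurableSet_Iic integrable_stdPhi,
    integral_stdPhi]

lemma stdPhiCDF_zero : stdPhiCDF 0 = 1 / 2 := by
  have h := stdPhiCDF_add_stdPhiCDF_neg 0
  rw [neg_zero] at h
  linarith

lemma stdPhiCDF_strictMono : StrictMono stdPhiCDF := by
  intro a b hab
  have h_diff : stdPhiCDF b - stdPhiCDF a = ∫ t in a..b, stdPhi t := by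
    unfold stdPhiCDF
    exact intervalIntegral.integral_Iic_sub_Iic integrable_stdPhi.integrableOn
      integrable_stdPhi.integrableOn
  have h_pos : 0 < ∫ t in a..b, stdPhi t :=
    intervalIntegral.intervalIntegral_pos_of_pos_on integrable_stdPhi.intervalIntegrable
      (fun t _ => stdPhi_pos t) hab
  linarith

@[fun_prop]
lemma measurable_stdPhiCDF : Measurable stdPhiCDF :=
  stdPhiCDF_strictMono.monotone.measurable

lemma snPDF_zero_loc (lam σ z : ℝ) :
    snPDF 0 lam σ z = 2 * (σ⁻¹ * stdPhi (z / σ)) * stdPhiCDF (lam * (z / σ)) := by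
  rw [snPDF, sub_zero, div_eq_mul_inv 2 σ, mul_assoc 2]

lemma snPDF_zero_zero (σ z : ℝ) : snPDF 0 0 σ z = σ⁻¹ * stdPhi (z / σ) := by
  rw [snPDF_zero_loc, zero_mul, stdPhiCDF_zero]
  ring

lemma snPDF_add_snPDF_neg (lam σ z : ℝ) :
    snPDF 0 lam σ z + snPDF 0 lam σ (-z) = 2 * snPDF 0 0 σ z := by
  rw [snPDF_zero_loc, snPDF_zero_loc, snPDF_zero_zero, neg_div, stdPhi_neg, mul_neg]
  linear_combination 2 * (σ⁻¹ * stdPhi (z / σ)) * stdPhiCDF_add_stdPhiCDF_neg (lam * (z / σ))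

lemma snPDF_nonneg (μ lam : ℝ) {σ : ℝ} (hσ : 0 ≤ σ) (z : ℝ) : 0 ≤ snPDF μ lam σ z := by
  unfold snPDF
  have := stdPhi_pos ((z - μ) / σ)
  have := stdPhiCDF_nonneg (lam * ((z - μ) / σ))
  positivity

lemma inv_mul_stdPhi_div_le {σ z : ℝ} (hσ : 0 < σ) (hz : z ≠ 0) :
    σ⁻¹ * stdPhi (z / σ) ≤ |z|⁻¹ := by
  have h := abs_mul_stdPhi_le_one (z / σ)
  rw [abs_div, abs_of_pos hσ, div_mul_eq_mul_div, div_le_one hσ] at h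
  rw [inv_mul_le_iff₀ hσ, ← div_eq_mul_inv, le_div_iff₀ (abs_pos.2 hz), mul_comm]
  exact h

lemma snPDF_le (μ lam : ℝ) {σ z : ℝ} (hσ : 0 < σ) (hz : z ≠ μ) :
    snPDF μ lam σ z ≤ 2 * |z - μ|⁻¹ := by
  have h_cdf := stdPhiCDF_le_one (lam * ((z - μ) / σ))
  have h_phi := inv_mul_stdPhi_div_le hσ (sub_ne_zero.2 hz)
  have := stdPhi_pos ((z - μ) / σ)
  rw [snPDF, div_eq_mul_inv 2 σ, mul_assoc 2]
  calc 2 * (σ⁻¹ * stdPhi ((z - μ) / σ)) * stdPhiCDF (lam * ((z - μ) / σ))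
      ≤ 2 * (σ⁻¹ * stdPhi ((z - μ) / σ)) * 1 := by gcongr
    _ ≤ 2 * |z - μ|⁻¹ := by linarith

@[fun_prop]
lemma measurable_snPDF (μ lam z : ℝ) : Measurable fun σ => snPDF μ lam σ z := by
  unfold snPDF
  fun_prop

lemma snPDF_lt_snPDF {lam lam' σ z : ℝ} (hlam : lam < lam') (hσ : 0 < σ) (hz : 0 < z) :
    snPDF 0 lam σ z < snPDF 0 lam' σ z := by
  rw [snPDF_zero_loc, snPDF_zero_loc]
  have := stdPhi_pos (z / σ)
  have : 0 < z / σ := div_pos hz hσ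
  gcongr
  exact stdPhiCDF_strictMono (by gcongr)

noncomputable def scaleCoord (σ : ℝ) : unitInterval :=
  ⟨exp (-(σ⁻¹ ^ 2) / 2), (exp_pos _).le, exp_le_one_iff.2 (by nlinarith [sq_nonneg σ⁻¹])⟩

@[fun_prop]
lemma measurable_scaleCoord : Measurable scaleCoord := by
  unfold scaleCoord
  fun_prop

lemma injOn_scaleCoord : InjOn scaleCoord (Ioi 0) := by
  intro a (ha : 0 < a) b (hb : 0 < b) h
  have h_sq : a⁻¹ ^ 2 = b⁻¹ ^ 2 := by
    have := exp_injective (congrArg Subtype.val h)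
    linarith
  exact inv_injective ((pow_left_inj₀ (inv_nonneg.2 ha.le) (inv_nonneg.2 hb.le) two_ne_zero).1 h_sq)

lemma snPDF_zero_zero_sqrt (σ : ℝ) (n : ℕ) :
    snPDF 0 0 σ √(n + 1) = snPDF 0 0 σ 1 * (scaleCoord σ : ℝ) ^ n := by
  rw [snPDF_zero_zero, snPDF_zero_zero, div_eq_mul_inv, stdPhi_sqrt_mul, one_div, scaleCoord]
  ring

noncomputable def scaleMomentMeasure (G : Measure ℝ) : Measure unitInterval :=
  (G.withDensity fun σ => ENNReal.ofReal (snPDF 0 0 σ 1)).map scaleCoord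

lemma integral_pow_scaleMomentMeasure {G : Measure ℝ} (hG : ∀ᵐ σ ∂G, 0 < σ) (n : ℕ) :
    ∫ x, (x : ℝ) ^ n ∂scaleMomentMeasure G = snsmPDF 0 0 G √(n + 1) := by
  rw [scaleMomentMeasure, integral_map measurable_scaleCoord.aemeasurable
    (by fun_prop : Continuous fun x : unitInterval => (x : ℝ) ^ n).aestronglyMeasurable,
    integral_withDensity_eq_integral_toReal_smul (by fun_prop)
    (.of_forall fun _ => ENNReal.ofReal_lt_top), snsmPDF]
  refine integral_congr_ae ?_
  filter_upwards [hG] with σ hσ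
  rw [ENNReal.toReal_ofReal (snPDF_nonneg 0 0 hσ.le 1), smul_eq_mul, snPDF_zero_zero_sqrt]

section Mixture

variable {G G' : Measure ℝ} [IsFiniteMeasure G] [IsFiniteMeasure G']

lemma integrable_snPDF (μ lam : ℝ) (hG : ∀ᵐ σ ∂G, 0 < σ) {z : ℝ} (hz : z ≠ μ) :
    Integrable (fun σ => snPDF μ lam σ z) G := by
  refine (integrable_const (2 * |z - μ|⁻¹)).mono' (measurable_snPDF μ lam z).aestronglyMeasurable ?_
  filter_upwards [hG] with σ hσ
  rw [Real.norm_of_nonneg (snPDF_nonneg μ lam hσ.le z)]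
  exact snPDF_le μ lam hσ hz

lemma snsmPDF_add_snsmPDF_neg (lam : ℝ) (hG : ∀ᵐ σ ∂G, 0 < σ) {z : ℝ} (hz : z ≠ 0) :
    snsmPDF 0 lam G z + snsmPDF 0 lam G (-z) = 2 * snsmPDF 0 0 G z := by
  rw [snsmPDF, snsmPDF, snsmPDF, ← integral_add (integrable_snPDF 0 lam hG hz)
    (integrable_snPDF 0 lam hG (neg_ne_zero.2 hz)), ← integral_const_mul]
  simp only [snPDF_add_snPDF_neg]

lemma continuousOn_snsmPDF_zero_zero (hG : ∀ᵐ σ ∂G, 0 < σ) :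
    ContinuousOn (snsmPDF 0 0 G) (Ioi 0) := by
  intro z₀ (hz₀ : 0 < z₀)
  refine ContinuousAt.continuousWithinAt <| continuousAt_of_dominated
    (bound := fun _ => 2 * (z₀ / 2)⁻¹)
    (.of_forall fun z => (measurable_snPDF 0 0 z).aestronglyMeasurable)
    ?_ (integrable_const _) ?_
  · filter_upwards [Ioi_mem_nhds (half_lt_self hz₀)] with z (hz : z₀ / 2 < z)
    filter_upwards [hG] with σ hσ
    have hz_pos : 0 < z := (half_pos hz₀).trans hz
    rw [Real.norm_of_nonneg (snPDF_nonneg 0 0 hσ.le z)]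
    calc snPDF 0 0 σ z ≤ 2 * |z - 0|⁻¹ := snPDF_le 0 0 hσ hz_pos.ne'
      _ ≤ 2 * (z₀ / 2)⁻¹ := by
        rw [sub_zero, abs_of_pos hz_pos]
        gcongr
  · refine .of_forall fun σ => ?_
    simp only [snPDF_zero_zero]
    fun_prop

lemma snsmPDF_zero_zero_eqOn {lam lam' : ℝ} (hG : ∀ᵐ σ ∂G, 0 < σ) (hG' : ∀ᵐ σ ∂G', 0 < σ)
    (heq : ∀ᵐ z, snsmPDF 0 lam G z = snsmPDF 0 lam' G' z) :
    EqOn (snsmPDF 0 0 G) (snsmPDF 0 0 G') (Ioi 0) := by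
  refine Measure.eqOn_open_of_ae_eq (μ := volume) ?_ isOpen_Ioi
    (continuousOn_snsmPDF_zero_zero hG) (continuousOn_snsmPDF_zero_zero hG')
  have heq_neg : ∀ᵐ z, snsmPDF 0 lam G (-z) = snsmPDF 0 lam' G' (-z) :=
    (Measure.measurePreserving_neg volume).quasiMeasurePreserving.ae heq
  refine ae_restrict_of_ae ?_
  filter_upwards [heq, heq_neg, Measure.ae_ne volume 0] with z h h_neg hz
  linarith [snsmPDF_add_snsmPDF_neg lam hG hz, snsmPDF_add_snsmPDF_neg lam' hG' hz]

lemma isFiniteMeasure_scaleMomentMeasure (hG : ∀ᵐ σ ∂G, 0 < σ) :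
    IsFiniteMeasure (scaleMomentMeasure G) :=
  have := isFiniteMeasure_withDensity_ofReal (integrable_snPDF 0 0 hG one_ne_zero).2
  Measure.isFiniteMeasure_map _ _

theorem eq_of_snsmPDF_zero_zero_eqOn (hG : ∀ᵐ σ ∂G, 0 < σ) (hG' : ∀ᵐ σ ∂G', 0 < σ)
    (h : EqOn (snsmPDF 0 0 G) (snsmPDF 0 0 G') (Ioi 0)) : G = G' := by
  have := isFiniteMeasure_scaleMomentMeasure hG
  have := isFiniteMeasure_scaleMomentMeasure hG'
  have h_moments : scaleMomentMeasure G = scaleMomentMeasure G' :=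
    Measure.ext_of_forall_integral_pow_eq fun n => by
      rw [integral_pow_scaleMomentMeasure hG, integral_pow_scaleMomentMeasure hG',
        h (show 0 < √((n : ℝ) + 1) by positivity)]
  set w : ℝ → ℝ≥0∞ := fun σ => ENNReal.ofReal (snPDF 0 0 σ 1)
  have h_density : G.withDensity w = G'.withDensity w :=
    Measure.eq_of_map_eq_of_injOn measurable_scaleCoord measurableSet_Ioi injOn_scaleCoord
      ((withDensity_absolutelyContinuous G w).ae_le hG)
      ((withDensity_absolutelyContinuous G' w).ae_le hG') h_moments
  have h_recover (μ : Measure ℝ) (hμ : ∀ᵐ σ ∂μ, 0 < σ) :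
      (μ.withDensity w).withDensity (fun σ => (w σ)⁻¹) = μ := by
    refine withDensity_inv_same (by fun_prop) ?_ (.of_forall fun _ => ENNReal.ofReal_ne_top)
    filter_upwards [hμ] with σ hσ
    rw [ne_eq, ENNReal.ofReal_eq_zero, not_le, snPDF_zero_zero]
    exact mul_pos (inv_pos.2 hσ) (stdPhi_pos _)
  rw [← h_recover G hG, ← h_recover G' hG', h_density]

lemma snsmPDF_strictMono [NeZero G] (hG : ∀ᵐ σ ∂G, 0 < σ) {z : ℝ} (hz : 0 < z) :
    StrictMono fun lam => snsmPDF 0 lam G z := by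
  intro a b hab
  show snsmPDF 0 a G z < snsmPDF 0 b G z
  have h_lt : ∀ᵐ σ ∂G, snPDF 0 a σ z < snPDF 0 b σ z :=
    hG.mono fun σ hσ => snPDF_lt_snPDF hab hσ hz
  have h_int_a := integrable_snPDF 0 a hG hz.ne'
  have h_int_b := integrable_snPDF 0 b hG hz.ne'
  unfold snsmPDF
  rw [← sub_pos, ← integral_sub h_int_b h_int_a, integral_pos_iff_support_of_nonneg_ae
    (h_lt.mono fun σ hσ => (sub_pos.2 hσ).le) (h_int_b.sub h_int_a), pos_iff_ne_zero]
  intro h_null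
  obtain ⟨σ, hσ, hσ_null⟩ := (h_lt.and (measure_eq_zero_iff_ae_notMem.1 h_null)).exists
  exact hσ_null (sub_pos.2 hσ).ne'

end Mixture

theorem stmt2 (lam lam' : ℝ) (G G' : Measure ℝ)
    (hG : IsProbabilityMeasure G) (hG0 : G {σ : ℝ | σ ≤ 0} = 0)
    (hG' : IsProbabilityMeasure G') (hG0' : G' {σ : ℝ | σ ≤ 0} = 0)
    (heq : ∀ᵐ z ∂(volume : Measure ℝ), snsmPDF 0 lam G z = snsmPDF 0 lam' G' z) :
    lam = lam' ∧ G = G' := by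
  have hG_pos : ∀ᵐ σ ∂G, 0 < σ := by simpa [ae_iff] using hG0
  have hG_pos' : ∀ᵐ σ ∂G', 0 < σ := by simpa [ae_iff] using hG0'
  obtain rfl : G = G' :=
    eq_of_snsmPDF_zero_zero_eqOn hG_pos hG_pos' (snsmPDF_zero_zero_eqOn hG_pos hG_pos' heq)
  have : (ae (volume.restrict (Ioi (0 : ℝ)))).NeBot := ae_restrict_neBot.2 (by simp)
  obtain ⟨z, hz, hz_eq⟩ :=
    ((ae_restrict_mem (measurableSet_Ioi (a := (0 : ℝ)))).and (ae_restrict_of_ae heq)).exists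
  exact ⟨(snsmPDF_strictMono hG_pos hz).injective hz_eq, rfl⟩
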